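/- arXiv:2307.16671 — 2 statements merged into one kernel-verified Lean document; each statement's English description precedes it below -/
import Mathlib

section
/- For finite posets P and Q, bdim(P × Q) ≤ bdim(P) + bdim(Q); that is, if P has a Boolean realizer of size d and Q has a Boolean realizer of size e, then there exist linear orders on P × Q and a Boolean function χ of arity d + e forming a Boolean realizer of P × Q. -/
/-- `L` is a tuple of `d` linear orders on `α` and `φ` a Boolean function such
that `x ≤ y` in the poset `α` iff `φ` applied to the comparisons is `true`. -/
def IsBoolRealizer {α : Type*} [PartialOrder α] {d : ℕ}
    (L : Fin d → α → α → Bool) (φ : (Fin d → Bool) → Bool) : Prop :=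
  (∀ i, IsLinearOrder α (fun x y => L i x y = true)) ∧
  ∀ x y : α, x ≤ y ↔ φ (fun i => L i x y) = true

/-- The Boolean dimension: least `d` admitting a Boolean realizer of size `d`. -/
noncomputable def bdim (α : Type*) [PartialOrder α] : ℕ :=
  sInf {d : ℕ | ∃ L : Fin d → α → α → Bool, ∃ φ, IsBoolRealizer L φ}

/-- Classical `decide`. -/
noncomputable def bR (p : Prop) : Bool := @decide p (Classical.propDecidable p)

lemma bR_iff (p : Prop) : bR p = true ↔ p := by
  unfold bR; exact @decide_eq_true_iff p (Classical.propDecidable p)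

lemma bR_bool (b : Bool) : bR (b = true) = b := by
  cases h : b <;> · have := bR_iff (b = true); simp [h] at this ⊢; simp [this, h]

/-- Lexicographic-style combination of two linear orders via projections is linear. -/
lemma isLinearOrder_lexpair {α A B : Type*} {r : A → A → Prop} {s : B → B → Prop}
    (hr : IsLinearOrder A r) (hs : IsLinearOrder B s)
    (f : α → A) (g : α → B) (hfg : ∀ a b : α, f a = f b → g a = g b → a = b) :
    IsLinearOrder α (fun a b => (r (f a) (f b) ∧ f a ≠ f b) ∨ (f a = f b ∧ s (g a) (g b))) := by
  haveI := hr; haveI := hs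
  refine { refl := ?_, trans := ?_, antisymm := ?_, total := ?_ }
  · intro a; exact Or.inr ⟨rfl, refl_of s _⟩
  · rintro a b c (⟨h1, h2⟩ | ⟨h1, h2⟩) (⟨h3, h4⟩ | ⟨h3, h4⟩)
    · by_cases h : f a = f c
      · exact absurd (antisymm_of r h1 (h ▸ h3)) h2
      · exact Or.inl ⟨trans_of r h1 h3, h⟩
    · exact Or.inl ⟨h3 ▸ h1, h3 ▸ h2⟩
    · exact Or.inl ⟨h1 ▸ h3, h1 ▸ h4⟩
    · exact Or.inr ⟨h1.trans h3, trans_of s h2 h4⟩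
  · rintro a b (⟨h1, h2⟩ | ⟨h1, h2⟩) (⟨h3, h4⟩ | ⟨h3, h4⟩)
    · exact absurd (antisymm_of r h1 h3) h2
    · exact absurd h3.symm h2
    · exact absurd h1.symm h4
    · exact hfg a b h1 (antisymm_of s h2 h4)
  · intro a b
    by_cases h : f a = f b
    · rcases total_of s (g a) (g b) with h' | h'
      · exact Or.inl (Or.inr ⟨h, h'⟩)
      · exact Or.inr (Or.inr ⟨h.symm, h'⟩)
    · rcases total_of r (f a) (f b) with h' | h'
      · exact Or.inl (Or.inl ⟨h', h⟩)
      · exact Or.inr (Or.inl ⟨h', Ne.symm h⟩)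

/-- For any pair `(a,b)` there is a linear extension of the order that
additionally avoids `a ≤ b` whenever `¬ a ≤ b`. -/
lemma exists_sep_ext {α : Type*} [PartialOrder α] (a b : α) :
    ∃ s : α → α → Prop, IsLinearOrder α s ∧ (∀ x y : α, x ≤ y → s x y) ∧ (¬ a ≤ b → ¬ s a b) := by
  by_cases h : a ≤ b
  · obtain ⟨s, hs, hle⟩ := extend_partialOrder ((· ≤ ·) : α → α → Prop)
    exact ⟨s, hs, fun x y hxy => hle x y hxy, fun h' => absurd h h'⟩
  · set r' : α → α → Prop := fun x y => x ≤ y ∨ (x ≤ b ∧ a ≤ y) with hr'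
    haveI : IsPartialOrder α r' :=
      { refl := fun x => Or.inl le_rfl
        trans := by
          rintro x y z (h1 | ⟨h1, h2⟩) (h3 | ⟨h3, h4⟩)
          · exact Or.inl (h1.trans h3)
          · exact Or.inr ⟨h1.trans h3, h4⟩
          · exact Or.inr ⟨h1, h2.trans h3⟩
          · exact absurd (h2.trans h3) h
        antisymm := by
          rintro x y (h1 | ⟨h1, h2⟩) (h3 | ⟨h3, h4⟩)
          · exact le_antisymm h1 h3
          · exact absurd ((h4.trans h1).trans h3) h
          · exact absurd ((h2.trans h3).trans h1) h
          · exact absurd (h2.trans h3) h }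
    obtain ⟨s, hs, hle⟩ := extend_partialOrder r'
    refine ⟨s, hs, fun x y hxy => hle x y (Or.inl hxy), fun _ hsab => ?_⟩
    haveI := hs
    have hba : s b a := hle b a (Or.inr ⟨le_rfl, le_rfl⟩)
    exact h (antisymm_of s hsab hba ▸ le_rfl)

/-- Every finite poset admits a Boolean realizer. -/
lemma exists_boolRealizer (α : Type*) [Fintype α] [PartialOrder α] :
    ∃ d : ℕ, ∃ L : Fin d → α → α → Bool, ∃ φ, IsBoolRealizer L φ := by
  classical
  set e := (Fintype.equivFin (α × α)) with he
  choose s hlin hext hsep using fun p : α × α => exists_sep_ext (α := α) p.1 p.2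
  refine ⟨Fintype.card (α × α), fun i x y => bR (s (e.symm i) x y),
    fun b => decide (∀ i, b i = true), ?_, ?_⟩
  · intro i
    have h1 : (fun x y => bR (s (e.symm i) x y) = true) = s (e.symm i) := by
      funext x y; exact propext (bR_iff _)
    rw [h1]; exact hlin (e.symm i)
  · intro x y
    rw [decide_eq_true_iff]
    constructor
    · intro h i; rw [bR_iff]; exact hext (e.symm i) x y h
    · intro h
      by_contra hxy
      have h2 := h (e (x, y))
      rw [bR_iff] at h2
      simp only [Equiv.symm_apply_apply] at h2
      exact hsep (x, y) hxy h2

/-- Combining realizers of `P` and `Q` into a realizer of `P × Q`. -/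
lemma boolRealizer_prod {P Q : Type*} [PartialOrder P] [PartialOrder Q]
    {d e : ℕ} {L : Fin d → P → P → Bool} {φ : (Fin d → Bool) → Bool}
    {M : Fin e → Q → Q → Bool} {ψ : (Fin e → Bool) → Bool}
    (hL : IsBoolRealizer L φ) (hM : IsBoolRealizer M ψ) :
    ∃ N : Fin (d + e) → (P × Q) → (P × Q) → Bool, ∃ χ, IsBoolRealizer N χ := by
  classical
  obtain ⟨sS, hsS, hsSle⟩ := extend_partialOrder ((· ≤ ·) : P → P → Prop)
  obtain ⟨sT, hsT, hsTle⟩ := extend_partialOrder ((· ≤ ·) : Q → Q → Prop)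
  set rL : Fin d → P → P → Prop := fun i a b => L i a b = true with hrL
  set rM : Fin e → Q → Q → Prop := fun j a b => M j a b = true with hrM
  set NL : Fin d → (P × Q) → (P × Q) → Bool := fun i x y =>
    bR ((rL i x.1 y.1 ∧ x.1 ≠ y.1) ∨ (x.1 = y.1 ∧ sT x.2 y.2)) with hNL
  set NM : Fin e → (P × Q) → (P × Q) → Bool := fun j x y =>
    bR ((rM j x.2 y.2 ∧ x.2 ≠ y.2) ∨ (x.2 = y.2 ∧ sS x.1 y.1)) with hNM
  refine ⟨fun i => Fin.addCases NL NM i,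
    fun b => φ (fun i => b (Fin.castAdd e i)) && ψ (fun j => b (Fin.natAdd d j)), ?_, ?_⟩
  · intro i
    induction i using Fin.addCases with
    | left i =>
      simp only [Fin.addCases_left]
      have h1 : (fun x y : P × Q => NL i x y = true) =
          (fun x y : P × Q => (rL i x.1 y.1 ∧ x.1 ≠ y.1) ∨ (x.1 = y.1 ∧ sT x.2 y.2)) := by
        funext x y; exact propext (bR_iff _)
      rw [h1]
      exact isLinearOrder_lexpair (hL.1 i) hsT Prod.fst Prod.snd
        (fun a b h1 h2 => Prod.ext h1 h2)
    | right j =>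
      simp only [Fin.addCases_right]
      have h1 : (fun x y : P × Q => NM j x y = true) =
          (fun x y : P × Q => (rM j x.2 y.2 ∧ x.2 ≠ y.2) ∨ (x.2 = y.2 ∧ sS x.1 y.1)) := by
        funext x y; exact propext (bR_iff _)
      rw [h1]
      exact isLinearOrder_lexpair (hM.1 j) hsS Prod.snd Prod.fst
        (fun a b h1 h2 => Prod.ext h2 h1)
  · intro x y
    have htopφ : φ (fun _ => true) = true := by
      have h := (hL.2 x.1 x.1).1 le_rfl
      have h2 : (fun i => L i x.1 x.1) = fun _ => true := by
        funext i
        haveI := hL.1 i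
        exact refl_of (fun a b => L i a b = true) x.1
      rwa [h2] at h
    have htopψ : ψ (fun _ => true) = true := by
      have h := (hM.2 x.2 x.2).1 le_rfl
      have h2 : (fun j => M j x.2 x.2) = fun _ => true := by
        funext j
        haveI := hM.1 j
        exact refl_of (fun a b => M j a b = true) x.2
      rwa [h2] at h
    simp only [Fin.addCases_left, Fin.addCases_right, Prod.le_def, Bool.and_eq_true]
    haveI := hsS; haveI := hsT
    by_cases h1 : x.1 = y.1 <;> by_cases h2 : x.2 = y.2
    · have hl : ∀ i, NL i x y = true :=
        fun i => (bR_iff _).2 (Or.inr ⟨h1, h2 ▸ refl_of sT x.2⟩)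
      have hm : ∀ j, NM j x y = true :=
        fun j => (bR_iff _).2 (Or.inr ⟨h2, h1 ▸ refl_of sS x.1⟩)
      simp only [funext hl, funext hm, htopφ, htopψ]
      exact iff_of_true ⟨h1 ▸ le_rfl, h2 ▸ le_rfl⟩ (by simp)
    · have hm : ∀ j, NM j x y = M j x.2 y.2 := by
        intro j
        show bR ((rM j x.2 y.2 ∧ x.2 ≠ y.2) ∨ (x.2 = y.2 ∧ sS x.1 y.1)) = M j x.2 y.2
        rw [show ((rM j x.2 y.2 ∧ x.2 ≠ y.2) ∨ (x.2 = y.2 ∧ sS x.1 y.1)) = rM j x.2 y.2 from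
          propext (by constructor <;> [rintro (⟨h, _⟩ | ⟨h, _⟩); intro h] <;> first
            | exact h | exact absurd h h2 | exact Or.inl ⟨h, h2⟩)]
        exact bR_bool _
      simp only [funext hm]
      constructor
      · rintro ⟨_, hxy2⟩
        have hl : ∀ i, NL i x y = true :=
          fun i => (bR_iff _).2 (Or.inr ⟨h1, hsTle _ _ hxy2⟩)
        exact ⟨by simp only [funext hl, htopφ], (hM.2 x.2 y.2).1 hxy2⟩
      · rintro ⟨_, hψ⟩
        exact ⟨h1 ▸ le_rfl, (hM.2 x.2 y.2).2 hψ⟩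
    · have hl : ∀ i, NL i x y = L i x.1 y.1 := by
        intro i
        show bR ((rL i x.1 y.1 ∧ x.1 ≠ y.1) ∨ (x.1 = y.1 ∧ sT x.2 y.2)) = L i x.1 y.1
        rw [show ((rL i x.1 y.1 ∧ x.1 ≠ y.1) ∨ (x.1 = y.1 ∧ sT x.2 y.2)) = rL i x.1 y.1 from
          propext (by constructor <;> [rintro (⟨h, _⟩ | ⟨h, _⟩); intro h] <;> first
            | exact h | exact absurd h h1 | exact Or.inl ⟨h, h1⟩)]
        exact bR_bool _
      simp only [funext hl]
      constructor
      · rintro ⟨hxy1, _⟩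
        have hm : ∀ j, NM j x y = true :=
          fun j => (bR_iff _).2 (Or.inr ⟨h2, hsSle _ _ hxy1⟩)
        exact ⟨(hL.2 x.1 y.1).1 hxy1, by simp only [funext hm, htopψ]⟩
      · rintro ⟨hφ, _⟩
        exact ⟨(hL.2 x.1 y.1).2 hφ, h2 ▸ le_rfl⟩
    · have hl : ∀ i, NL i x y = L i x.1 y.1 := by
        intro i
        show bR ((rL i x.1 y.1 ∧ x.1 ≠ y.1) ∨ (x.1 = y.1 ∧ sT x.2 y.2)) = L i x.1 y.1
        rw [show ((rL i x.1 y.1 ∧ x.1 ≠ y.1) ∨ (x.1 = y.1 ∧ sT x.2 y.2)) = rL i x.1 y.1 from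
          propext (by constructor <;> [rintro (⟨h, _⟩ | ⟨h, _⟩); intro h] <;> first
            | exact h | exact absurd h h1 | exact Or.inl ⟨h, h1⟩)]
        exact bR_bool _
      have hm : ∀ j, NM j x y = M j x.2 y.2 := by
        intro j
        show bR ((rM j x.2 y.2 ∧ x.2 ≠ y.2) ∨ (x.2 = y.2 ∧ sS x.1 y.1)) = M j x.2 y.2
        rw [show ((rM j x.2 y.2 ∧ x.2 ≠ y.2) ∨ (x.2 = y.2 ∧ sS x.1 y.1)) = rM j x.2 y.2 from
          propext (by constructor <;> [rintro (⟨h, _⟩ | ⟨h, _⟩); intro h] <;> first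
            | exact h | exact absurd h h2 | exact Or.inl ⟨h, h2⟩)]
        exact bR_bool _
      simp only [funext hl, funext hm]
      rw [← hL.2 x.1 y.1, ← hM.2 x.2 y.2]

theorem bdim_prod_le_of_finite {P Q : Type*} [Fintype P] [Fintype Q]
    [PartialOrder P] [PartialOrder Q] :
    bdim (P × Q) ≤ bdim P + bdim Q := by
  classical
  have hPset : {d : ℕ | ∃ L : Fin d → P → P → Bool, ∃ φ, IsBoolRealizer L φ}.Nonempty := by
    obtain ⟨d, L, φ, h⟩ := exists_boolRealizer P
    exact ⟨d, L, φ, h⟩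
  have hQset : {d : ℕ | ∃ L : Fin d → Q → Q → Bool, ∃ φ, IsBoolRealizer L φ}.Nonempty := by
    obtain ⟨d, L, φ, h⟩ := exists_boolRealizer Q
    exact ⟨d, L, φ, h⟩
  obtain ⟨L, φ, hL⟩ := Nat.sInf_mem hPset
  obtain ⟨M, ψ, hM⟩ := Nat.sInf_mem hQset
  obtain ⟨N, χ, hN⟩ := boolRealizer_prod hL hM
  exact Nat.sInf_le ⟨N, χ, hN⟩
end

section
/- There exist 5 linear orders L_1,...,L_5 on the powerset of {1,...,6} and φ : {0,1}^5 → {0,1} (namely φ(ε)=1 iff at most one ε_i = 0) such that for all subsets x, y of {1,...,6}: x ⊆ y iff at most one i ∈ {1,...,5} has x >_{L_i} y. -/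
set_option maxRecDepth 40000

def permA : List ℕ := [0, 3, 2, 8, 30, 36, 32, 37, 6, 11, 7, 13, 41, 42, 43, 44, 53, 56, 4, 27, 49, 57, 33, 59, 61, 14, 9, 15, 51, 12, 10, 16, 17, 5, 18, 23, 31, 39, 34, 40, 20, 24, 21, 25, 45, 47, 46, 48, 52, 60, 19, 28, 50, 58, 35, 38, 54, 26, 22, 29, 55, 1, 62, 63]
def permB : List ℕ := [0, 8, 42, 38, 22, 33, 58, 57, 4, 19, 43, 40, 29, 34, 59, 46, 12, 15, 47, 51, 25, 31, 48, 54, 11, 32, 49, 56, 30, 36, 60, 62, 1, 10, 3, 39, 23, 26, 2, 41, 5, 20, 6, 44, 18, 35, 7, 45, 13, 16, 52, 53, 27, 28, 50, 55, 14, 21, 61, 17, 24, 37, 9, 63]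
def permC : List ℕ := [0, 57, 40, 55, 3, 8, 6, 9, 58, 59, 50, 60, 22, 4, 7, 10, 12, 13, 42, 16, 18, 19, 20, 21, 14, 15, 53, 17, 23, 24, 25, 26, 27, 31, 41, 46, 28, 32, 43, 48, 35, 1, 51, 2, 37, 5, 52, 11, 29, 33, 44, 47, 30, 34, 45, 49, 36, 39, 54, 61, 38, 62, 56, 63]
def permD : List ℕ := [0, 1, 5, 6, 42, 2, 11, 12, 26, 38, 27, 37, 33, 43, 36, 45, 14, 8, 15, 16, 21, 3, 22, 17, 28, 39, 29, 41, 34, 44, 58, 48, 46, 50, 54, 7, 47, 4, 59, 13, 30, 51, 55, 56, 49, 52, 60, 61, 18, 9, 20, 19, 23, 10, 24, 25, 31, 40, 32, 57, 35, 53, 62, 63]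
def permE : List ℕ := [0, 33, 5, 34, 2, 46, 24, 35, 4, 3, 7, 8, 9, 47, 16, 37, 11, 40, 27, 41, 20, 48, 28, 36, 12, 57, 17, 45, 21, 60, 29, 61, 13, 38, 6, 42, 1, 49, 25, 39, 52, 55, 15, 53, 10, 56, 26, 54, 18, 43, 30, 44, 22, 50, 31, 51, 14, 58, 19, 59, 23, 62, 32, 63]

/-- Encode a subset of `Fin 6` as a natural number in `[0, 64)`. -/
def code6 (x : Finset (Fin 6)) : ℕ := ∑ j ∈ x, 2 ^ (j : ℕ)

/-- The five rank lists (permutations of `{0, ..., 63}`) found by a SAT solver. -/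
def rks : Fin 5 → List ℕ := ![permA, permB, permC, permD, permE]

/-- The rank of a subset in the `i`-th linear order. -/
def rk (i : Fin 5) (x : Finset (Fin 6)) : ℕ := (rks i).getD (code6 x) 0

/-- The five linear orders, given by comparing ranks. -/
def Lf (i : Fin 5) (x y : Finset (Fin 6)) : Bool := decide (rk i x ≤ rk i y)

theorem rk_inj : ∀ (i : Fin 5) (x y : Finset (Fin 6)), rk i x = rk i y → x = y := by
  decide

theorem hmain : ∀ x y : Finset (Fin 6),
    x ⊆ y ↔ (Finset.univ.filter fun i => ¬ Lf i x y = true).card ≤ 1 := by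
  decide

theorem exists_boolean_realizer_B6 :
    ∃ L : Fin 5 → Finset (Fin 6) → Finset (Fin 6) → Bool,
      ∃ φ : (Fin 5 → Bool) → Bool,
        (∀ ε : Fin 5 → Bool,
          φ ε = true ↔ (Finset.univ.filter fun i => ε i = false).card ≤ 1) ∧
        IsBoolRealizer L φ ∧
        ∀ x y : Finset (Fin 6),
          x ⊆ y ↔ (Finset.univ.filter fun i => ¬ L i x y = true).card ≤ 1 := by
  refine ⟨Lf, fun ε => decide ((Finset.univ.filter fun i => ε i = false).card ≤ 1),
    fun ε => decide_eq_true_iff, ⟨?_, ?_⟩, hmain⟩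
  · intro i
    have h : ∀ x y, (Lf i x y = true) ↔ rk i x ≤ rk i y := by
      intro x y; simp [Lf]
    exact
      { refl := fun a => (h a a).2 le_rfl
        trans := fun a b c hab hbc => (h a c).2 (le_trans ((h a b).1 hab) ((h b c).1 hbc))
        antisymm := fun a b hab hba => rk_inj i a b (le_antisymm ((h a b).1 hab) ((h b a).1 hba))
        total := fun a b => by
          rcases le_total (rk i a) (rk i b) with hle | hle
          · exact Or.inl ((h a b).2 hle)
          · exact Or.inr ((h b a).2 hle) }
  · intro x y
    rw [decide_eq_true_iff]
    have := hmain x y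
    simpa [Finset.le_iff_subset, Bool.not_eq_true] using this
end
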